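/- Let Λ be a countable index set, let (κ_λ)_{λ∈Λ} ∈ (0,∞)^Λ with sup_λ κ_λ < ∞, and for each λ let s_λ : ℝ → [0,∞] be proper, convex and lower semicontinuous with s_λ(0) = 0; set φ_λ := prox_{s_λ}. Let z = (z_λ)_λ ∈ ℓ²(Λ) be such that x := (φ_λ(z_λ)/κ_λ)_λ ∈ ℓ²(Λ). Then x is the unique minimizer over ℓ²(Λ) of the functional F(w) = ½·∑_λ (κ_λ w_λ − z_λ)² + ∑_λ s_λ(κ_λ w_λ), with values in [0,∞]. -/
import Mathlib


open scoped ENNReal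

noncomputable section

/-- `p` is the (unique) proximal point at `x` of the `[0,∞]`-valued functional `s`, i.e.
`p = prox_s(x)` is the unique minimizer of `y ↦ (x-y)²/2 + s(y)`. -/
def IsProxPtE (s : ℝ → ℝ≥0∞) (x p : ℝ) : Prop :=
  (∀ y : ℝ, ENNReal.ofReal ((x - p) ^ 2 / 2) + s p ≤ ENNReal.ofReal ((x - y) ^ 2 / 2) + s y) ∧
  ∀ q : ℝ, (∀ y : ℝ, ENNReal.ofReal ((x - q) ^ 2 / 2) + s q ≤
    ENNReal.ofReal ((x - y) ^ 2 / 2) + s y) → q = p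

/-- Convexity for `[0,∞]`-valued functions on `ℝ`. -/
def ENNConvexOn (s : ℝ → ℝ≥0∞) : Prop :=
  ∀ x y : ℝ, ∀ a b : ℝ, 0 ≤ a → 0 ≤ b → a + b = 1 →
    s (a * x + b * y) ≤ ENNReal.ofReal a * s x + ENNReal.ofReal b * s y

/-- The Tikhonov-type functional `F(w) = ½ ∑_λ (κ_λ w_λ − z_λ)² + ∑_λ s_λ(κ_λ w_λ)`
on `ℓ²(Λ)`, with values in `[0,∞]`. -/
noncomputable def TikF {Λ : Type*} (κ : Λ → ℝ) (s : Λ → ℝ → ℝ≥0∞) (z : Λ → ℝ)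
    (w : lp (fun _ : Λ => ℝ) 2) : ℝ≥0∞ :=
  (1 / 2 : ℝ≥0∞) * ∑' l, ENNReal.ofReal ((κ l * w l - z l) ^ 2) + ∑' l, s l (κ l * w l)

lemma tikF_eq_tsum {Λ : Type*} (κ : Λ → ℝ) (s : Λ → ℝ → ℝ≥0∞) (z : Λ → ℝ)
    (w : lp (fun _ : Λ => ℝ) 2) :
    TikF κ s z w
      = ∑' l, (ENNReal.ofReal ((z l - κ l * w l) ^ 2 / 2) + s l (κ l * w l)) := by
  rw [ENNReal.tsum_add, TikF, ← ENNReal.tsum_mul_left]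
  congr 1
  refine tsum_congr fun l => ?_
  have h1 : ((z : Λ → ℝ) l - κ l * w l) ^ 2 = (κ l * w l - (z : Λ → ℝ) l) ^ 2 := by ring
  rw [h1, eq_comm, mul_comm, ENNReal.ofReal_div_of_pos (by norm_num),
    ENNReal.ofReal_ofNat, ENNReal.div_eq_inv_mul, one_div]

/-- If `x = (prox_{s_λ}(z_λ)/κ_λ)_λ ∈ ℓ²(Λ)`, then `x` is the unique
minimizer over `ℓ²(Λ)` of `F(w) = ½ ∑ (κ_λ w_λ − z_λ)² + ∑ s_λ(κ_λ w_λ)`. -/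
theorem statement3 {Λ : Type*} [Countable Λ]
    (κ : Λ → ℝ) (hκ : ∀ l, 0 < κ l) (hκbd : BddAbove (Set.range κ))
    (s : Λ → ℝ → ℝ≥0∞)
    (hproper : ∀ l, ∃ x, s l x ≠ ⊤)
    (hconv : ∀ l, ENNConvexOn (s l))
    (hlsc : ∀ l, LowerSemicontinuous (s l))
    (hs0 : ∀ l, s l 0 = 0)
    (φ : Λ → ℝ → ℝ) (hφ : ∀ l x, IsProxPtE (s l) x (φ l x))
    (z : lp (fun _ : Λ => ℝ) 2)
    (hx : Memℓp (fun l => φ l (z l) / κ l) 2) :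
    (∀ w : lp (fun _ : Λ => ℝ) 2,
      TikF κ s z (⟨fun l => φ l (z l) / κ l, hx⟩ : lp (fun _ : Λ => ℝ) 2) ≤ TikF κ s z w) ∧
    (∀ w : lp (fun _ : Λ => ℝ) 2, (∀ w' : lp (fun _ : Λ => ℝ) 2, TikF κ s z w ≤ TikF κ s z w')
      → w = (⟨fun l => φ l (z l) / κ l, hx⟩ : lp (fun _ : Λ => ℝ) 2)) := by
  classical
  set x : lp (fun _ : Λ => ℝ) 2 := ⟨fun l => φ l (z l) / κ l, hx⟩ with hxdef
  have hxl : ∀ l, κ l * (x : Λ → ℝ) l = φ l ((z : Λ → ℝ) l) := by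
    intro l
    show κ l * (φ l ((z : Λ → ℝ) l) / κ l) = _
    rw [mul_div_cancel₀ _ (ne_of_gt (hκ l))]
  have hterm : ∀ w : lp (fun _ : Λ => ℝ) 2,
      TikF κ s z w
        = ∑' l, (ENNReal.ofReal (((z : Λ → ℝ) l - κ l * w l) ^ 2 / 2) + s l (κ l * w l)) :=
    fun w => tikF_eq_tsum κ s z w
  -- termwise minimality
  have hmin : ∀ l (y : ℝ),
      ENNReal.ofReal (((z : Λ → ℝ) l - κ l * (x : Λ → ℝ) l) ^ 2 / 2) + s l (κ l * (x : Λ → ℝ) l)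
        ≤ ENNReal.ofReal (((z : Λ → ℝ) l - y) ^ 2 / 2) + s l y := by
    intro l y
    rw [hxl l]
    exact (hφ l ((z : Λ → ℝ) l)).1 y
  -- finiteness of TikF at x
  have hfin : TikF κ s z x ≠ ⊤ := by
    rw [hterm x]
    have hle : ∀ l,
        ENNReal.ofReal (((z : Λ → ℝ) l - κ l * (x : Λ → ℝ) l) ^ 2 / 2)
          + s l (κ l * (x : Λ → ℝ) l)
          ≤ ENNReal.ofReal (((z : Λ → ℝ) l) ^ 2 / 2) := by
      intro l
      have := hmin l 0
      simpa [hs0 l] using this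
    refine ne_top_of_le_ne_top ?_ (ENNReal.tsum_le_tsum hle)
    have hsum : Summable fun l => ((z : Λ → ℝ) l) ^ 2 / 2 := by
      have h2 : Summable fun l => ‖(z : Λ → ℝ) l‖ ^ (2 : ℝ≥0∞).toReal :=
        (lp.memℓp z).summable (by norm_num)
      have h3 : Summable fun l => ((z : Λ → ℝ) l) ^ 2 := by
        refine h2.congr fun l => ?_
        rw [show (2 : ℝ≥0∞).toReal = (2 : ℕ) by norm_num, Real.rpow_natCast,
          Real.norm_eq_abs, sq_abs]
      exact h3.div_const 2
    rw [← ENNReal.ofReal_tsum_of_nonneg (fun l => by positivity) hsum]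
    exact ENNReal.ofReal_ne_top
  have hminsum : ∀ w : lp (fun _ : Λ => ℝ) 2, TikF κ s z x ≤ TikF κ s z w := by
    intro w
    rw [hterm x, hterm w]
    exact ENNReal.tsum_le_tsum fun l => hmin l (κ l * w l)
  refine ⟨hminsum, ?_⟩
  intro w hw
  have hwle : TikF κ s z w ≤ TikF κ s z x := hw x
  -- each term at w equals term at x
  have heq : ∀ l,
      ENNReal.ofReal (((z : Λ → ℝ) l - κ l * w l) ^ 2 / 2) + s l (κ l * w l)
        = ENNReal.ofReal (((z : Λ → ℝ) l - κ l * (x : Λ → ℝ) l) ^ 2 / 2)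
          + s l (κ l * (x : Λ → ℝ) l) := by
    intro l
    by_contra hne
    have hlt : ENNReal.ofReal (((z : Λ → ℝ) l - κ l * (x : Λ → ℝ) l) ^ 2 / 2)
        + s l (κ l * (x : Λ → ℝ) l)
        < ENNReal.ofReal (((z : Λ → ℝ) l - κ l * w l) ^ 2 / 2) + s l (κ l * w l) :=
      lt_of_le_of_ne (hmin l _) (fun h => hne h.symm)
    have : TikF κ s z x < TikF κ s z w := by
      rw [hterm x, hterm w]
      refine ENNReal.tsum_lt_tsum ?_ (fun a => hmin a _) hlt
      rw [← hterm x]; exact hfin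
    exact absurd hwle (not_le.mpr this)
  -- conclude w l = x l
  have hweq : ∀ l, (w : Λ → ℝ) l = (x : Λ → ℝ) l := by
    intro l
    have hglobal : ∀ y : ℝ,
        ENNReal.ofReal (((z : Λ → ℝ) l - κ l * w l) ^ 2 / 2) + s l (κ l * w l)
          ≤ ENNReal.ofReal (((z : Λ → ℝ) l - y) ^ 2 / 2) + s l y := by
      intro y
      rw [heq l]
      exact hmin l y
    have := (hφ l ((z : Λ → ℝ) l)).2 (κ l * w l) hglobal
    have hx' : κ l * (w : Λ → ℝ) l = κ l * (x : Λ → ℝ) l := by rw [this, hxl l]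
    exact mul_left_cancel₀ (ne_of_gt (hκ l)) hx'
  exact lp.ext (funext hweq)
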